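/- arXiv:2406.14332 — 2 statements merged into one kernel-verified Lean document; each statement's English description precedes it below -/
import Mathlib

section
/- Let H be a digraph whose underlying graph has a maximum matching M with |M| = m > 0, let X be the set of vertices of H not covered by M, and suppose |X| ≥ 2 and δ⁰(H) ≥ m, where δ⁰ is the minimum of all in-degrees and out-degrees. Then every vertex x ∈ X satisfies d⁺(x) = d⁻(x) = m. -/
/-!
Every neighbour of an uncovered vertex is covered, and a maximum matching admits no augmenting
path `x w p y` between distinct uncovered vertices `x`, `y`. Hence sending each neighbour of `x`
to its partner in `M` injects `N(x)` into `V(M)` with image disjoint from `N(y)`, so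
`|N(x)| + |N(y)| ≤ |V(M)| ≤ 2m`. Since `|N(y)| ≥ d⁺(y) ≥ m`, we get
`m ≤ d^±(x) ≤ |N(x)| ≤ m`.
-/

/-- The underlying graph of a digraph given by its arc relation. -/
def UGraph {V : Type*} (A : V → V → Prop) : SimpleGraph V where
  Adj a b := a ≠ b ∧ (A a b ∨ A b a)
  symm := ⟨fun a b h => ⟨h.1.symm, h.2.symm⟩⟩
  loopless := ⟨fun a h => h.1 rfl⟩

namespace SimpleGraph.Subgraph

variable {V : Type*} {G : SimpleGraph V} {M : G.Subgraph} {u v w p x y : V}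

lemma IsMatching.ncard_verts_le [Finite V] (hM : M.IsMatching) :
    M.verts.ncard ≤ 2 * M.edgeSet.ncard := by
  have hE := M.edgeSet.toFinite
  have hedge : ∀ e : Sym2 V, (e : Set V).ncard ≤ 2 := fun e =>
    Sym2.ind (fun a b => by
      rw [Sym2.coe_mk]
      exact (Set.ncard_insert_le a {b}).trans (by rw [Set.ncard_singleton])) e
  calc M.verts.ncard ≤ ∑ e ∈ hE.toFinset, (e : Set V).ncard := by
        simpa [hM.verts_eq_biUnion_edgeSet] using
          hE.toFinset.set_ncard_biUnion_le (fun e => (e : Set V))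
    _ ≤ hE.toFinset.card • 2 := Finset.sum_le_card_nsmul _ _ _ fun e _ => hedge e
    _ = 2 * M.edgeSet.ncard := by rw [Set.ncard_eq_toFinset_card _ hE, smul_eq_mul, mul_comm]

lemma IsMatching.sup_subgraphOfAdj (hM : M.IsMatching) (hu : u ∉ M.verts) (hv : v ∉ M.verts)
    (huv : G.Adj u v) : (M ⊔ G.subgraphOfAdj huv).IsMatching := by
  refine hM.sup (.subgraphOfAdj huv) (Set.disjoint_left.2 fun z hzM hz => ?_)
  rw [hM.support_eq_verts] at hzM
  have : z = u ∨ z = v := by simpa using (G.subgraphOfAdj huv).support_subset_verts hz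
  rcases this with rfl | rfl
  exacts [hu hzM, hv hzM]

lemma ncard_edgeSet_sup_subgraphOfAdj [Finite V] (hu : u ∉ M.verts) (huv : G.Adj u v) :
    (M ⊔ G.subgraphOfAdj huv).edgeSet.ncard = M.edgeSet.ncard + 1 := by
  rw [edgeSet_sup, edgeSet_subgraphOfAdj, Set.union_singleton,
    Set.ncard_insert_of_notMem fun h : s(u, v) ∈ M.edgeSet => hu (M.edge_vert h)]

lemma IsMatching.deleteVerts_of_adj (hM : M.IsMatching) (hwp : M.Adj w p) :
    (M.deleteVerts {w, p}).IsMatching := by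
  intro v hv
  rw [deleteVerts_verts] at hv
  obtain ⟨u, hvu, hu⟩ := hM hv.1
  have hu_wp : u ∉ ({w, p} : Set V) := by
    rintro (rfl | rfl)
    · exact hv.2 (.inr (hM.eq_of_adj_left hvu.symm hwp))
    · exact hv.2 (.inl (hM.eq_of_adj_right hvu hwp))
  exact ⟨u, deleteVerts_adj.2 ⟨hv.1, hv.2, hvu.snd_mem, hu_wp, hvu⟩,
    fun z hz => hu z (deleteVerts_adj.1 hz).2.2.2.2⟩

lemma IsMatching.edgeSet_deleteVerts_of_adj (hM : M.IsMatching) (hwp : M.Adj w p) :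
    (M.deleteVerts {w, p}).edgeSet = M.edgeSet \ {s(w, p)} := by
  ext e
  induction e using Sym2.inductionOn with | hf a b => ?_
  rw [Set.mem_sdiff, Subgraph.mem_edgeSet, Subgraph.mem_edgeSet, deleteVerts_adj]
  simp only [Set.mem_singleton_iff, Set.mem_insert_iff, Sym2.eq_iff]
  constructor
  · rintro ⟨-, ha, -, hb, hab⟩
    exact ⟨hab, by tauto⟩
  · rintro ⟨hab, hne⟩
    refine ⟨hab.fst_mem, ?_, hab.snd_mem, ?_, hab⟩ <;> rintro (rfl | rfl)
    · exact hne (.inl ⟨rfl, hM.eq_of_adj_left hab hwp⟩)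
    · exact hne (.inr ⟨rfl, hM.eq_of_adj_left hab hwp.symm⟩)
    · exact hne (.inr ⟨hM.eq_of_adj_right hab hwp.symm, rfl⟩)
    · exact hne (.inl ⟨hM.eq_of_adj_right hab hwp, rfl⟩)

def IsMaximumMatching (M : G.Subgraph) : Prop :=
  M.IsMatching ∧ ∀ M' : G.Subgraph, M'.IsMatching → M'.edgeSet.ncard ≤ M.edgeSet.ncard

lemma IsMaximumMatching.mem_verts_of_adj [Finite V] (hM : M.IsMaximumMatching)
    (hx : x ∉ M.verts) (hxw : G.Adj x w) : w ∈ M.verts := by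
  by_contra hw
  have := hM.2 _ (hM.1.sup_subgraphOfAdj hx hw hxw)
  rw [ncard_edgeSet_sup_subgraphOfAdj hx hxw] at this
  omega

/-- Otherwise replacing `wp` by `xw` and `py` would enlarge `M`. -/
lemma IsMaximumMatching.not_adj_of_adj_of_adj [Finite V] (hM : M.IsMaximumMatching)
    (hx : x ∉ M.verts) (hy : y ∉ M.verts) (hxy : x ≠ y) (hxw : G.Adj x w) (hwp : M.Adj w p) :
    ¬G.Adj p y := by
  intro hpy
  set M₀ := M.deleteVerts {w, p}
  have hx₀ : x ∉ M₀.verts := fun h => hx h.1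
  have hw₀ : w ∉ M₀.verts := fun h => h.2 (.inl rfl)
  set M₁ := M₀ ⊔ G.subgraphOfAdj hxw
  obtain ⟨hp₁, hy₁⟩ : p ∉ M₁.verts ∧ y ∉ M₁.verts := by
    have hwM := hwp.fst_mem
    have hpM := hwp.snd_mem
    have hwp_ne := (M.adj_sub hwp).ne
    simp only [M₁, M₀, verts_sup, deleteVerts_verts, subgraphOfAdj_verts, Set.mem_union,
      Set.mem_sdiff, Set.mem_insert_iff, Set.mem_singleton_iff]
    grind
  have hM₁ : M₁.IsMatching := (hM.1.deleteVerts_of_adj hwp).sup_subgraphOfAdj hx₀ hw₀ hxw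
  have hcard := hM.2 _ (hM₁.sup_subgraphOfAdj hp₁ hy₁ hpy)
  rw [ncard_edgeSet_sup_subgraphOfAdj hp₁, ncard_edgeSet_sup_subgraphOfAdj hx₀,
    hM.1.edgeSet_deleteVerts_of_adj hwp] at hcard
  have hdel_wp := Set.ncard_sdiff_singleton_add_one (Subgraph.mem_edgeSet.2 hwp)
  omega

lemma IsMaximumMatching.ncard_neighborSet_add_ncard_neighborSet_le [Finite V]
    (hM : M.IsMaximumMatching) (hx : x ∉ M.verts) (hy : y ∉ M.verts) (hxy : x ≠ y) :
    (G.neighborSet x).ncard + (G.neighborSet y).ncard ≤ 2 * M.edgeSet.ncard := by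
  choose! partner hpartner using fun v (hv : v ∈ M.verts) => (hM.1 hv).exists
  have hNx : G.neighborSet x ⊆ M.verts := fun _ => hM.mem_verts_of_adj hx
  have hNy : G.neighborSet y ⊆ M.verts := fun _ => hM.mem_verts_of_adj hy
  have hinj : Set.InjOn partner (G.neighborSet x) := fun v hv u hu h =>
    hM.1.eq_of_adj_right (hpartner v (hNx hv)) (h ▸ hpartner u (hNx hu))
  have hdisj : Disjoint (partner '' G.neighborSet x) (G.neighborSet y) := by
    refine Set.disjoint_left.2 ?_
    rintro _ ⟨w, hxw, rfl⟩ hyp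
    exact hM.not_adj_of_adj_of_adj hx hy hxy hxw (hpartner w (hNx hxw)) hyp.symm
  have hsub : partner '' G.neighborSet x ∪ G.neighborSet y ⊆ M.verts :=
    Set.union_subset (Set.image_subset_iff.2 fun w hw => (hpartner w (hNx hw)).snd_mem) hNy
  calc (G.neighborSet x).ncard + (G.neighborSet y).ncard
      = (partner '' G.neighborSet x ∪ G.neighborSet y).ncard := by
        rw [Set.ncard_union_eq hdisj, hinj.ncard_image]
    _ ≤ M.verts.ncard := Set.ncard_le_ncard hsub
    _ ≤ 2 * M.edgeSet.ncard := hM.1.ncard_verts_le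

end SimpleGraph.Subgraph

section UGraph

variable {V : Type*} {A : V → V → Prop}

lemma setOf_rel_subset_neighborSet_uGraph (hirr : ∀ v, ¬A v v) (v : V) :
    {w | A v w} ⊆ (UGraph A).neighborSet v :=
  fun w hw => ⟨fun h => hirr w (h ▸ hw), .inl hw⟩

lemma setOf_rel_flip_subset_neighborSet_uGraph (hirr : ∀ v, ¬A v v) (v : V) :
    {w | A w v} ⊆ (UGraph A).neighborSet v :=
  fun w hw => ⟨fun h => hirr w (h ▸ hw), .inr hw⟩

end UGraph

theorem stmt_4_general {V : Type*} [Fintype V] (A : V → V → Prop) (hirr : ∀ v, ¬ A v v)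
    (M : (UGraph A).Subgraph) (hM : M.IsMatching)
    (hmax : ∀ M' : (UGraph A).Subgraph, M'.IsMatching →
      M'.edgeSet.ncard ≤ M.edgeSet.ncard)
    (m : ℕ) (hm : M.edgeSet.ncard = m)
    (hX : 2 ≤ (M.vertsᶜ).ncard)
    (hdel : ∀ v : V, m ≤ {w | A v w}.ncard ∧ m ≤ {w | A w v}.ncard) :
    ∀ x ∈ M.vertsᶜ, {w | A x w}.ncard = m ∧ {w | A w x}.ncard = m := by
  intro x hx
  obtain ⟨y, hy, hyx⟩ := Set.exists_ne_of_one_lt_ncard (by omega : 1 < M.vertsᶜ.ncard) x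
  have hmaxM : M.IsMaximumMatching := ⟨hM, hmax⟩
  have hsum := hmaxM.ncard_neighborSet_add_ncard_neighborSet_le hx hy hyx.symm
  have hNy : m ≤ ((UGraph A).neighborSet y).ncard :=
    (hdel y).1.trans (Set.ncard_le_ncard (setOf_rel_subset_neighborSet_uGraph hirr y))
  have hNx : ((UGraph A).neighborSet x).ncard ≤ m := by omega
  have hout := Set.ncard_le_ncard (setOf_rel_subset_neighborSet_uGraph hirr x)
  have hin := Set.ncard_le_ncard (setOf_rel_flip_subset_neighborSet_uGraph hirr x)
  have hdegx := hdel x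
  constructor <;> omega

/-- with a maximum matching `M` of size `m`, uncovered set of size ≥ 2
and minimum semi-degree ≥ m, every uncovered vertex has in- and out-degree exactly `m`. -/
theorem stmt_4 {V : Type*} [Fintype V] (A : V → V → Prop) (hirr : ∀ v, ¬ A v v)
    (M : (UGraph A).Subgraph) (hM : M.IsMatching)
    (hmax : ∀ M' : (UGraph A).Subgraph, M'.IsMatching →
      M'.edgeSet.ncard ≤ M.edgeSet.ncard)
    (m : ℕ) (hm : M.edgeSet.ncard = m) (hpos : 0 < m)
    (hX : 2 ≤ (M.vertsᶜ).ncard)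
    (hdel : ∀ v : V, m ≤ {w | A v w}.ncard ∧ m ≤ {w | A w v}.ncard) :
    ∀ x ∈ M.vertsᶜ, {w | A x w}.ncard = m ∧ {w | A w x}.ncard = m :=
  stmt_4_general A hirr M hM hmax m hm hX hdel
end

section
/- Let D be a digraph, Q a closed directed trail in D, S ⊆ V(D), and s ∈ S − V(Q) with some arc between s and V(Q). If D is S-strong, then D contains either a closed directed trail Q' with |V(Q') ∩ S| > |V(Q) ∩ S|, or a directed path T from a vertex u' ∈ V(Q) to a vertex u ∈ V(Q), with u ≠ u', passing through s and satisfying V(T) ∩ V(Q) = {u', u}. -/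
/-- A directed walk: consecutive vertices are joined by arcs. -/
def IsDiwalk {V : Type*} (A : V → V → Prop) : List V → Prop
  | [] => True
  | [_] => True
  | a :: b :: l => A a b ∧ IsDiwalk A (b :: l)

/-- The list of arcs traversed by a walk given as a vertex list. -/
def arcList {V : Type*} (l : List V) : List (V × V) := l.zip l.tail

/-- A directed trail: a directed walk with no repeated arcs. -/
def IsDitrail {V : Type*} (A : V → V → Prop) (l : List V) : Prop :=
  IsDiwalk A l ∧ (arcList l).Nodup

/-- A closed directed trail: a directed trail whose first and last vertices coincide. -/
def IsClosedDitrail {V : Type*} (A : V → V → Prop) (l : List V) : Prop :=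
  IsDitrail A l ∧ l.head? = l.getLast?

/-- A directed path from `u` to `v` (no repeated vertices). -/
def IsDipathFrom {V : Type*} (A : V → V → Prop) (u v : V) (l : List V) : Prop :=
  IsDiwalk A l ∧ l.Nodup ∧ l.head? = some u ∧ l.getLast? = some v

/-- Reachability by a directed path. -/
def DiReach {V : Type*} (A : V → V → Prop) (u v : V) : Prop :=
  ∃ l, IsDipathFrom A u v l


/-!
If no vertex of `S` lies on `Q`, the one-vertex trail `[s]` already meets `S` more often.
Otherwise fix `t ∈ S` on `Q`. Reversing every arc exchanges the two possible directions of the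
arc between `s` and `w ∈ Q`, so we may assume it is `w → s`. A dipath from `s` to `t` first
returns to `Q` at some `u`, and prefixing `w` gives a walk `w → s → ⋯ → u` meeting `Q` only
at its ends. If `u ≠ w` this is the required path. If `u = w` it is a closed ditrail through `w`
sharing no arc with `Q`, so splicing it into `Q` at `w` gives a
closed ditrail that contains `s` as well as every vertex of `Q`.
-/

section

variable {V : Type*} {A : V → V → Prop}

theorem isDiwalk_iff_isChain : ∀ {l : List V}, IsDiwalk A l ↔ l.IsChain A
  | [] => by simp [IsDiwalk]
  | [_] => by simp [IsDiwalk]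
  | _ :: b :: l => by
    rw [IsDiwalk, List.isChain_cons_cons, isDiwalk_iff_isChain (l := b :: l)]

theorem isDiwalk_reverse {l : List V} : IsDiwalk A l.reverse ↔ IsDiwalk (flip A) l := by
  simp only [isDiwalk_iff_isChain, List.isChain_reverse]
  rfl

theorem arcList_cons_cons (a b : V) (l : List V) :
    arcList (a :: b :: l) = (a, b) :: arcList (b :: l) := rfl

theorem arcList_append_cons : ∀ (l : List V) (x : V) (m : List V),
    arcList (l ++ x :: m) = arcList (l ++ [x]) ++ arcList (x :: m)
  | [], _, _ => rfl
  | [_], _, _ => rfl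
  | a :: b :: l, x, m => by
    have := arcList_append_cons (b :: l) x m
    simp only [List.cons_append, arcList_cons_cons] at this ⊢
    rw [this]

theorem arcList_reverse : ∀ l : List V,
    arcList l.reverse = ((arcList l).map Prod.swap).reverse
  | [] => rfl
  | [_] => rfl
  | a :: b :: l => by
    have : arcList (l.reverse ++ [b, a]) = arcList (l.reverse ++ [b]) ++ [(b, a)] :=
      arcList_append_cons _ b [a]
    rw [List.reverse_cons, List.reverse_cons, List.append_assoc, List.singleton_append, this,
      ← List.reverse_cons, arcList_reverse (b :: l), arcList_cons_cons]
    simp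

theorem mem_of_mem_arcList {l : List V} {p : V × V} (hp : p ∈ arcList l) :
    p.1 ∈ l ∧ p.2 ∈ l :=
  ⟨(List.of_mem_zip hp).1, List.mem_of_mem_tail (List.of_mem_zip hp).2⟩

theorem IsDiwalk.rel_of_mem_arcList : ∀ {l : List V}, IsDiwalk A l →
    ∀ {p : V × V}, p ∈ arcList l → A p.1 p.2
  | [], _, _, hp => by simp [arcList] at hp
  | [_], _, _, hp => by simp [arcList] at hp
  | _ :: b :: _, hw, p, hp => by
    rcases List.mem_cons.mp hp with rfl | hp
    · exact hw.1
    · exact IsDiwalk.rel_of_mem_arcList (l := b :: _) hw.2 hp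

theorem nodup_arcList_of_nodup_tail {l : List V} (h : l.tail.Nodup) : (arcList l).Nodup := by
  have hsnd : (arcList l).map Prod.snd = l.tail := List.map_snd_zip (by simp)
  exact List.Nodup.of_map Prod.snd (hsnd ▸ h)

theorem isDitrail_reverse {l : List V} : IsDitrail A l.reverse ↔ IsDitrail (flip A) l := by
  rw [IsDitrail, IsDitrail, isDiwalk_reverse, arcList_reverse, List.nodup_reverse,
    List.nodup_map_iff Prod.swap_injective]

theorem isClosedDitrail_reverse {l : List V} :
    IsClosedDitrail A l.reverse ↔ IsClosedDitrail (flip A) l := by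
  rw [IsClosedDitrail, IsClosedDitrail, isDitrail_reverse, List.head?_reverse,
    List.getLast?_reverse, eq_comm]

theorem isDipathFrom_reverse {u v : V} {l : List V} :
    IsDipathFrom A u v l.reverse ↔ IsDipathFrom (flip A) v u l := by
  rw [IsDipathFrom, IsDipathFrom, isDiwalk_reverse, List.nodup_reverse, List.head?_reverse,
    List.getLast?_reverse, and_comm (a := l.getLast? = some u)]

theorem DiReach.flip {u v : V} (h : DiReach A u v) : DiReach (flip A) v u :=
  let ⟨l, hl⟩ := h
  ⟨l.reverse, isDipathFrom_reverse.2 hl⟩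

theorem List.exists_prefix_ending_at_first {P : V → Prop} :
    ∀ {l : List V}, (∃ v ∈ l, P v) → ∃ F u, F ++ [u] <+: l ∧ P u ∧ ∀ v ∈ F, ¬ P v
  | [], h => by simp at h
  | a :: l, h => by
    by_cases ha : P a
    · exact ⟨[], a, by simp, ha, by simp⟩
    · obtain ⟨F, u, hpre, hu, hF⟩ :=
        List.exists_prefix_ending_at_first (l := l) (by simpa [ha] using h)
      exact ⟨a :: F, u, List.cons_prefix_cons.2 ⟨rfl, hpre⟩, hu, by simpa [ha] using hF⟩

theorem IsDipathFrom.exists_prefix_to_first {P : V → Prop} {a b : V} {l : List V}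
    (h : IsDipathFrom A a b l) (hb : P b) :
    ∃ F u, IsDipathFrom A a u (F ++ [u]) ∧ P u ∧ ∀ v ∈ F, ¬ P v := by
  obtain ⟨hwalk, hnodup, hhead, hlast⟩ := h
  obtain ⟨F, u, ⟨t, rfl⟩, hu, hF⟩ :=
    List.exists_prefix_ending_at_first ⟨b, List.mem_of_getLast? hlast, hb⟩
  refine ⟨F, u, ⟨?_, hnodup.sublist (List.sublist_append_left _ _), ?_, by simp⟩, hu, hF⟩
  · rw [isDiwalk_iff_isChain] at hwalk ⊢
    exact hwalk.prefix (List.prefix_append _ _)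
  · simpa using hhead

theorem IsDipathFrom.isDiwalk_cons {a b c : V} {l : List V} (h : IsDipathFrom A a b l)
    (hc : A c a) : IsDiwalk A (c :: l) := by
  obtain ⟨hwalk, -, hhead, -⟩ := h
  obtain ⟨l, rfl⟩ : ∃ l', l = a :: l' := List.head?_eq_some_iff.mp hhead
  exact ⟨hc, hwalk⟩

theorem IsClosedDitrail.splice (hirr : ∀ v, ¬ A v v) {Qa Qb F : List V} {u : V}
    (hQ : IsClosedDitrail A (Qa ++ u :: Qb)) (hE : IsDitrail A (u :: F ++ [u]))
    (hF : ∀ v ∈ F, v ∉ Qa ++ u :: Qb) :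
    IsClosedDitrail A (Qa ++ u :: (F ++ u :: Qb)) := by
  obtain ⟨⟨hQwalk, hQarcs⟩, hQends⟩ := hQ
  obtain ⟨hEwalk, hEarcs⟩ := hE
  have hsplit : Qa ++ u :: (F ++ u :: Qb) = (Qa ++ u :: F) ++ u :: Qb := by simp
  refine ⟨⟨?_, ?_⟩, ?_⟩
  · rw [isDiwalk_iff_isChain] at hQwalk hEwalk ⊢
    rw [List.isChain_split] at hQwalk
    rw [hsplit, List.isChain_split, List.append_assoc, List.cons_append, List.isChain_split]
    exact ⟨⟨hQwalk.1, hEwalk⟩, hQwalk.2⟩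
  · have hperm : (arcList (Qa ++ u :: (F ++ u :: Qb))).Perm
        (arcList (Qa ++ u :: Qb) ++ arcList (u :: F ++ [u])) := by
      rw [hsplit, arcList_append_cons, List.append_assoc, List.cons_append,
        arcList_append_cons Qa u (F ++ [u]), arcList_append_cons Qa u Qb, List.append_assoc,
        List.append_assoc]
      exact List.perm_append_comm.append_left _
    rw [hperm.nodup_iff, List.nodup_append]
    refine ⟨hQarcs, hEarcs, fun p hpQ q hpE hpq => ?_⟩
    subst hpq
    -- the ear meets `Q` only in `u`, so a shared arc would be a loop at `u`
    have honly : ∀ v ∈ u :: F ++ [u], v ∈ Qa ++ u :: Qb → v = u := by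
      intro v hv hvQ
      obtain rfl | hv | rfl : v = u ∨ v ∈ F ∨ v = u := by simpa using hv
      · rfl
      · exact absurd hvQ (hF v hv)
      · rfl
    have hp := hEwalk.rel_of_mem_arcList hpE
    rw [honly _ (mem_of_mem_arcList hpE).1 (mem_of_mem_arcList hpQ).1,
      honly _ (mem_of_mem_arcList hpE).2 (mem_of_mem_arcList hpQ).2] at hp
    exact hirr u hp
  · have hhead : (Qa ++ u :: (F ++ u :: Qb)).head? = (Qa ++ u :: Qb).head? := by
      cases Qa <;> simp
    rw [hhead, hQends, hsplit, List.getLast?_append_of_ne_nil _ (List.cons_ne_nil _ _),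
      List.getLast?_append_of_ne_nil _ (List.cons_ne_nil _ _)]

theorem ncard_setOf_mem_lt {S : Set V} {Q Q' : List V} {s : V}
    (hsub : ∀ v ∈ S, v ∈ Q → v ∈ Q') (hs : s ∈ S) (hsQ : s ∉ Q) (hsQ' : s ∈ Q') :
    {v | v ∈ S ∧ v ∈ Q}.ncard < {v | v ∈ S ∧ v ∈ Q'}.ncard := by
  refine Set.ncard_lt_ncard ⟨fun v hv => ⟨hv.1, hsub v hv.1 hv.2⟩, fun h => ?_⟩
    (Q'.finite_toSet.subset fun v hv => hv.2)
  exact hsQ (h ⟨hs, hsQ'⟩).2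

/-- The second alternative is an ear of `Q` through `s`. -/
def ExtendsOrHasEar (A : V → V → Prop) (S : Set V) (Q : List V) (s : V) : Prop :=
  (∃ Q' : List V, IsClosedDitrail A Q' ∧
      {v | v ∈ S ∧ v ∈ Q}.ncard < {v | v ∈ S ∧ v ∈ Q'}.ncard) ∨
    (∃ (u' u : V) (P : List V), u' ∈ Q ∧ u ∈ Q ∧ u ≠ u' ∧
      IsDipathFrom A u' u P ∧ s ∈ P ∧
      ∀ w ∈ P, w ∈ Q → w = u' ∨ w = u)

theorem ExtendsOrHasEar.of_reverse {S : Set V} {Q : List V} {s : V}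
    (h : ExtendsOrHasEar (flip A) S Q.reverse s) : ExtendsOrHasEar A S Q s := by
  simp only [ExtendsOrHasEar, List.mem_reverse] at h
  rcases h with ⟨Q', hQ', hlt⟩ | ⟨u', u, P, hu', hu, hne, hP, hsP, honly⟩
  · refine Or.inl ⟨Q'.reverse, isClosedDitrail_reverse.2 hQ', ?_⟩
    simpa only [List.mem_reverse] using hlt
  · refine Or.inr ⟨u, u', P.reverse, hu, hu', hne.symm, isDipathFrom_reverse.2 hP,
      List.mem_reverse.2 hsP, fun w hw hwQ => (honly w (List.mem_reverse.1 hw) hwQ).symm⟩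

theorem extendsOrHasEar_singleton {S : Set V} {Q : List V} {s : V} (hs : s ∈ S)
    (hSQ : ∀ v ∈ S, v ∉ Q) : ExtendsOrHasEar A S Q s :=
  Or.inl ⟨[s], ⟨⟨trivial, List.nodup_nil⟩, rfl⟩,
    ncard_setOf_mem_lt (fun v hv hvQ => absurd hvQ (hSQ v hv)) hs (hSQ s hs)
      (List.mem_singleton_self s)⟩

theorem extendsOrHasEar_of_arc_of_diReach (hirr : ∀ v, ¬ A v v) {S : Set V} {Q : List V}
    {s w t : V} (hQ : IsClosedDitrail A Q) (hs : s ∈ S) (hsQ : s ∉ Q) (hw : w ∈ Q)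
    (hws : A w s) (ht : t ∈ Q) (hst : DiReach A s t) : ExtendsOrHasEar A S Q s := by
  obtain ⟨l, hl⟩ := hst
  obtain ⟨F, u, hR, hu, hFQ⟩ := hl.exists_prefix_to_first (P := (· ∈ Q)) ht
  have hwalk : IsDiwalk A (w :: F ++ [u]) := hR.isDiwalk_cons hws
  obtain ⟨-, hRnodup, hRhead, -⟩ := hR
  have hsF : s ∈ F := by
    have hsu : s ≠ u := by rintro rfl; exact hsQ hu
    simpa [hsu] using List.mem_of_head? hRhead
  by_cases hwu : w = u
  · subst hwu
    obtain ⟨Qa, Qb, rfl⟩ := List.append_of_mem hw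
    refine Or.inl ⟨_, hQ.splice hirr ⟨hwalk, nodup_arcList_of_nodup_tail hRnodup⟩ hFQ, ?_⟩
    refine ncard_setOf_mem_lt (fun v _ hv => ?_) hs hsQ (by simp [hsF])
    simp only [List.mem_append, List.mem_cons] at hv ⊢
    tauto
  · refine Or.inr ⟨w, u, w :: F ++ [u], hw, hu, Ne.symm hwu,
      ⟨hwalk, ?_, rfl, List.getLast?_concat⟩, by simp [hsF], fun v hv hvQ => ?_⟩
    · exact List.nodup_cons.2 ⟨by simpa [hwu] using fun h => hFQ w h hw, hRnodup⟩
    · obtain rfl | hv | rfl : v = w ∨ v ∈ F ∨ v = u := by simpa using hv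
      · exact Or.inl rfl
      · exact absurd hvQ (hFQ v hv)
      · exact Or.inr rfl

end

theorem stmt_17_general {V : Type*} (A : V → V → Prop) (hirr : ∀ v, ¬ A v v)
    (S : Set V) (Q : List V) (s : V)
    (hQ : IsClosedDitrail A Q) (hs : s ∈ S) (hsQ : s ∉ Q)
    (harc : ∃ w ∈ Q, A s w ∨ A w s)
    (hstrong : ∀ u ∈ S, ∀ v ∈ S, u ≠ v → DiReach A u v) :
    (∃ Q' : List V, IsClosedDitrail A Q' ∧
      {v | v ∈ S ∧ v ∈ Q}.ncard < {v | v ∈ S ∧ v ∈ Q'}.ncard) ∨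
    (∃ (u' u : V) (P : List V), u' ∈ Q ∧ u ∈ Q ∧ u ≠ u' ∧
      IsDipathFrom A u' u P ∧ s ∈ P ∧
      ∀ w ∈ P, w ∈ Q → w = u' ∨ w = u) := by
  rcases em (∃ t ∈ S, t ∈ Q) with ⟨t, htS, htQ⟩ | hSQ
  · have hts : t ≠ s := by rintro rfl; exact hsQ htQ
    obtain ⟨w, hw, hsw | hws⟩ := harc
    · exact ExtendsOrHasEar.of_reverse <| extendsOrHasEar_of_arc_of_diReach (A := flip A) hirr
        (isClosedDitrail_reverse.2 hQ) hs (by simpa using hsQ)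
        (List.mem_reverse.2 hw) hsw (List.mem_reverse.2 htQ) (hstrong t htS s hs hts).flip
    · exact extendsOrHasEar_of_arc_of_diReach hirr hQ hs hsQ hw hws htQ
        (hstrong s hs t htS hts.symm)
  · exact extendsOrHasEar_singleton hs fun v hv hvQ => hSQ ⟨v, hv, hvQ⟩

/-- extending a closed ditrail using an outside vertex `s ∈ S` with an
arc to/from the trail: either a closed ditrail meeting `S` more, or an attaching
dipath between two distinct trail vertices through `s`. -/
theorem stmt_17 {V : Type*} [Fintype V] (A : V → V → Prop) (hirr : ∀ v, ¬ A v v)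
    (S : Set V) (Q : List V) (s : V)
    (hQ : IsClosedDitrail A Q) (hs : s ∈ S) (hsQ : s ∉ Q)
    (harc : ∃ w ∈ Q, A s w ∨ A w s)
    (hstrong : ∀ u ∈ S, ∀ v ∈ S, u ≠ v → DiReach A u v) :
    (∃ Q' : List V, IsClosedDitrail A Q' ∧
      {v | v ∈ S ∧ v ∈ Q}.ncard < {v | v ∈ S ∧ v ∈ Q'}.ncard) ∨
    (∃ (u' u : V) (P : List V), u' ∈ Q ∧ u ∈ Q ∧ u ≠ u' ∧
      IsDipathFrom A u' u P ∧ s ∈ P ∧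
      ∀ w ∈ P, w ∈ Q → w = u' ∨ w = u) :=
  stmt_17_general A hirr S Q s hQ hs hsQ harc hstrong
end
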